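/- arXiv:2512.23540 — 2 statements merged into one kernel-verified Lean document; each statement's English description precedes it below -/
import Mathlib

section
/- For integers n and r with 1 ≤ r ≤ n-1, the following telescoping-type identity holds: the sum over the 2^r terms of reciprocals 1/(β^j_{n,r}·m_j), where the modes m_j run through the multiset {n-r, n-r+2, ..., n+r} arising from the binomial-type recursion β^j coefficients defined by β^1_{n,1} = β^2_{n,1} = 2n and the recursion in which each term with coefficient β and mode m splits into two terms with coefficients β·(2m-2) (mode m-1 shifted) and β·(2m+2) (mode m+1 shifted), equals 1/∏_{j=0}^{r} (n - r + 2j). -/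
/-- One step of the recursive expansion: a term with coefficient `β` and mode `m` splits
into two terms with coefficient `β·(2m)` at modes `m - 1` and `m + 1`, following the
substitution of the identity `𝒯_m = ((-𝒯_{m-1} + 𝒯_{m+1})/(2m))'`. -/
def betaStep (l : List (ℤ × ℤ)) : List (ℤ × ℤ) :=
  l.flatMap fun p => [(p.1 * (2 * p.2), p.2 - 1), (p.1 * (2 * p.2), p.2 + 1)]

lemma key (k : ℕ) (a b : ℝ) (hb : 0 < b) (hak : (k:ℝ) + 1 < a) :
    1/((b*(2*a)) * ∏ j ∈ Finset.range (k+1), (a - 1 - (k:ℝ) + 2*j))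
    + 1/((b*(2*a)) * ∏ j ∈ Finset.range (k+1), (a + 1 - (k:ℝ) + 2*j))
    = 1/(b * ∏ j ∈ Finset.range (k+1+1), (a - ((k:ℝ)+1) + 2*j)) := by
  have hk0 : (0:ℝ) ≤ (k:ℝ) := Nat.cast_nonneg k
  have ha0 : 0 < a := by linarith
  have h3 : a - (k:ℝ) - 1 ≠ 0 := by intro h; nlinarith
  have h4 : a + (k:ℝ) + 1 ≠ 0 := by intro h; nlinarith
  set P1 := ∏ j ∈ Finset.range (k+1), (a - 1 - (k:ℝ) + 2*(j:ℝ)) with hP1def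
  set P2 := ∏ j ∈ Finset.range (k+1), (a + 1 - (k:ℝ) + 2*(j:ℝ)) with hP2def
  have hP1 : 0 < P1 := Finset.prod_pos fun j hj => by
    have : (0:ℝ) ≤ (j:ℝ) := Nat.cast_nonneg j; linarith
  have hP2 : 0 < P2 := Finset.prod_pos fun j hj => by
    have : (0:ℝ) ≤ (j:ℝ) := Nat.cast_nonneg j; linarith
  have E1 : ∏ j ∈ Finset.range (k+1+1), (a - ((k:ℝ)+1) + 2*(j:ℝ)) = P1 * (a + k + 1) := by
    rw [Finset.prod_range_succ, hP1def]
    congr 1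
    · exact Finset.prod_congr rfl fun j _ => by ring
    · push_cast; ring
  have E2 : ∏ j ∈ Finset.range (k+1+1), (a - ((k:ℝ)+1) + 2*(j:ℝ)) = (a - k - 1) * P2 := by
    rw [Finset.prod_range_succ', hP2def, mul_comm]
    congr 1
    · push_cast; ring
    · exact Finset.prod_congr rfl fun j _ => by push_cast; ring
  rw [E1]
  have h2 : P2 = P1 * (a + k + 1) / (a - k - 1) := by
    rw [← E1, E2]
    field_simp
  rw [h2]
  field_simp
  ring

lemma betaStep_append (l1 l2 : List (ℤ × ℤ)) :
    betaStep (l1 ++ l2) = betaStep l1 ++ betaStep l2 := by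
  simp [betaStep]

lemma betaStep_iterate_append (k : ℕ) (l1 l2 : List (ℤ × ℤ)) :
    betaStep^[k] (l1 ++ l2) = betaStep^[k] l1 ++ betaStep^[k] l2 := by
  induction k generalizing l1 l2 with
  | zero => simp
  | succ k ih => simp [Function.iterate_succ_apply, betaStep_append, ih]

lemma betaStep_reciprocal_sum_aux (k : ℕ) : ∀ (β m : ℤ), 0 < β → (k : ℤ) < m →
    ((betaStep^[k] [(β, m)]).map (fun p => (1:ℝ)/((p.1:ℝ)*(p.2:ℝ)))).sum
      = 1 / ((β:ℝ) * ∏ j ∈ Finset.range (k+1), ((m:ℝ) - k + 2*j)) := by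
  induction k with
  | zero =>
    intro β m hβ hm
    simp
  | succ k ih =>
    intro β m hβ hm
    have hstep : betaStep [(β, m)] = [(β * (2*m), m - 1)] ++ [(β * (2*m), m + 1)] := by
      simp [betaStep]
    rw [Function.iterate_succ_apply, hstep, betaStep_iterate_append, List.map_append,
      List.sum_append]
    have hm' : (0:ℤ) < m := lt_of_le_of_lt (by positivity) hm
    have hβ' : 0 < β * (2*m) := by positivity
    have h1 : ((k:ℤ)) < m - 1 := by push_cast at hm ⊢; omega
    have h2 : ((k:ℤ)) < m + 1 := by omega
    rw [ih _ _ hβ' h1, ih _ _ hβ' h2]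
    have hak : ((k:ℝ)) + 1 < (m:ℝ) := by exact_mod_cast hm
    have hb0 : (0:ℝ) < (β:ℝ) := by exact_mod_cast hβ
    have := key k (m:ℝ) (β:ℝ) hb0 hak
    push_cast
    convert this using 3

/-- For `1 ≤ r ≤ n - 1`, the sum of the reciprocals `1/(β^j_{n,r}·m_j)` over the `2^r`
terms arising from the recursion started at `β^1_{n,1} = β^2_{n,1} = 2n` (modes `n-1`,
`n+1`) equals `1/∏_{j=0}^{r} (n - r + 2j)`. -/
theorem betaStep_reciprocal_sum (n r : ℕ) (hr : 1 ≤ r) (hrn : r ≤ n - 1) :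
    ((betaStep^[r - 1] [((2 * n : ℤ), (n : ℤ) - 1), ((2 * n : ℤ), (n : ℤ) + 1)]).map
        (fun p => (1 : ℝ) / ((p.1 : ℝ) * (p.2 : ℝ)))).sum =
      1 / ∏ j ∈ Finset.range (r + 1), ((n : ℝ) - r + 2 * j) := by
  have hn : r < n := by omega
  have hstart : [((2 * n : ℤ), (n : ℤ) - 1), ((2 * n : ℤ), (n : ℤ) + 1)]
      = betaStep [(1, (n:ℤ))] := by
    simp [betaStep]
  rw [hstart, ← Function.iterate_succ_apply, show (r - 1).succ = r from by omega]
  rw [betaStep_reciprocal_sum_aux r 1 (n:ℤ) one_pos (by exact_mod_cast hn)]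
  push_cast
  norm_num
end

section
/- Let f : [-1,1] → ℝ be absolutely continuous with f' integrable, i.e., U_0 = ∫_{-1}^1 |f'(x)| dx < ∞. Then for every n ≥ 1, the Chebyshev coefficient a_n = (2/π)∫_{-1}^1 f(x)T_n(x)/√(1-x²) dx satisfies |a_n| ≤ 2U_0/(π n). -/
open MeasureTheory Polynomial Polynomial.Chebyshev

namespace ChebAux

open Real Set

noncomputable def phi (n : ℕ) (x : ℝ) : ℝ := (T ℝ n).eval x / Real.sqrt (1 - x ^ 2)

lemma phi_meas (n : ℕ) : Measurable (phi n) := by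
  apply Measurable.div
  · exact (Polynomial.continuous_aeval (T ℝ n)).measurable
  · exact (Real.continuous_sqrt.comp (by continuity)).measurable

lemma eval_T (n : ℕ) {x : ℝ} (h1 : -1 ≤ x) (h2 : x ≤ 1) :
    (T ℝ n).eval x = Real.cos (n * Real.arccos x) := by
  have := T_real_cos (Real.arccos x) n
  rw [Real.cos_arccos h1 h2] at this
  simpa using this

lemma abs_eval_T (n : ℕ) {x : ℝ} (h1 : -1 ≤ x) (h2 : x ≤ 1) :
    |(T ℝ n).eval x| ≤ 1 := by
  rw [eval_T n h1 h2]; exact Real.abs_cos_le_one _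

lemma deriv_G (n : ℕ) {x : ℝ} (hx : x ∈ Set.Ioo (-1 : ℝ) 1) :
    HasDerivAt (fun y => Real.sin (n * Real.arccos y)) (-(n * phi n x)) x := by
  have ha := Real.hasDerivAt_arccos (ne_of_gt hx.1) (ne_of_lt hx.2)
  have h2 := (ha.const_mul (n : ℝ))
  have h3 := (Real.hasDerivAt_sin ((n : ℝ) * Real.arccos x)).comp x h2
  refine h3.congr_deriv ?_
  rw [← eval_T n hx.1.le hx.2.le, phi]
  ring

lemma integrable_dom :
    IntervalIntegrable (fun x : ℝ => (1 - x) ^ (-(1/2) : ℝ) + (1 + x) ^ (-(1/2) : ℝ))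
      volume (-1) 1 := by
  have h0 : IntervalIntegrable (fun x : ℝ => x ^ (-(1/2) : ℝ)) volume 0 2 :=
    intervalIntegral.intervalIntegrable_rpow' (by norm_num)
  have h1 := h0.comp_sub_left 1
  have h2 := h0.comp_add_left 1
  norm_num at h1 h2
  exact h1.symm.add h2

lemma one_div_sqrt_aux {a b : ℝ} (hb : 0 < b) (hab : b ≤ a) :
    1 / Real.sqrt a ≤ 1 / Real.sqrt b :=
  one_div_le_one_div_of_le (Real.sqrt_pos.mpr hb) (Real.sqrt_le_sqrt hab)

lemma phi_le {n : ℕ} {x : ℝ} (h1 : -1 ≤ x) (h2 : x ≤ 1) :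
    |phi n x| ≤ (1 - x) ^ (-(1/2) : ℝ) + (1 + x) ^ (-(1/2) : ℝ) := by
  have key : ∀ y : ℝ, 0 ≤ y → 1 / Real.sqrt y = y ^ (-(1/2) : ℝ) := by
    intro y hy
    rw [Real.rpow_neg hy, Real.sqrt_eq_rpow, one_div]
  have habs : |phi n x| ≤ 1 / Real.sqrt (1 - x ^ 2) := by
    rw [phi, abs_div, abs_of_nonneg (Real.sqrt_nonneg _)]
    rcases eq_or_lt_of_le (Real.sqrt_nonneg (1 - x ^ 2)) with h | h
    · rw [← h]; simp
    · gcongr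
      exact abs_eval_T n h1 h2
  rcases le_total 0 x with hx | hx
  · have h1x : 0 ≤ 1 - x := by linarith
    have hle : 1 / Real.sqrt (1 - x ^ 2) ≤ (1 - x) ^ (-(1/2) : ℝ) := by
      rcases eq_or_lt_of_le h1x with h | h
      · have hx1 : x = 1 := by linarith
        subst hx1; norm_num
      · rw [← key _ h1x]
        exact one_div_le_one_div_of_le (Real.sqrt_pos.mpr h) (Real.sqrt_le_sqrt (by nlinarith))
    have : (0:ℝ) ≤ (1 + x) ^ (-(1/2) : ℝ) := Real.rpow_nonneg (by linarith) _
    linarith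
  · have h1x : 0 ≤ 1 + x := by linarith
    have hle : 1 / Real.sqrt (1 - x ^ 2) ≤ (1 + x) ^ (-(1/2) : ℝ) := by
      rcases eq_or_lt_of_le h1x with h | h
      · have hx1 : x = -1 := by linarith
        subst hx1; norm_num
      · rw [← key _ h1x]
        exact one_div_le_one_div_of_le (Real.sqrt_pos.mpr h) (Real.sqrt_le_sqrt (by nlinarith))
    have : (0:ℝ) ≤ (1 - x) ^ (-(1/2) : ℝ) := Real.rpow_nonneg (by linarith) _
    linarith

lemma phi_intervalIntegrable (n : ℕ) : IntervalIntegrable (phi n) volume (-1) 1 := by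
  apply IntervalIntegrable.mono_fun integrable_dom
    ((phi_meas n).aestronglyMeasurable.restrict)
  filter_upwards [ae_restrict_mem measurableSet_uIoc] with x hx
  rw [Set.uIoc_of_le (by norm_num : (-1:ℝ) ≤ 1)] at hx
  have h := phi_le (n := n) hx.1.le hx.2
  rw [Real.norm_eq_abs, Real.norm_eq_abs]
  refine h.trans (le_abs_self _)

lemma integral_phi (n : ℕ) (hn : 1 ≤ n) {t : ℝ} (h1 : -1 ≤ t) (h2 : t ≤ 1) :
    ∫ x in t..1, phi n x = Real.sin (n * Real.arccos t) / n := by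
  have hcont : ContinuousOn (fun y => -(Real.sin (n * Real.arccos y)) / n) (Set.Icc t 1) := by
    apply Continuous.continuousOn
    continuity
  have hderiv : ∀ x ∈ Set.Ioo t 1,
      HasDerivAt (fun y => -(Real.sin (n * Real.arccos y)) / n) (phi n x) x := by
    intro x hx
    have hx' : x ∈ Set.Ioo (-1 : ℝ) 1 := ⟨lt_of_le_of_lt h1 hx.1, hx.2⟩
    have := ((deriv_G n hx').neg).div_const (n : ℝ)
    refine this.congr_deriv ?_
    have hn0 : (n : ℝ) ≠ 0 := by positivity
    field_simp
  have hii : IntervalIntegrable (phi n) volume t 1 :=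
    (phi_intervalIntegrable n).mono_set
      (Set.uIcc_subset_uIcc (by rw [Set.uIcc_of_le (by norm_num : (-1:ℝ) ≤ 1)]; exact ⟨h1, h2⟩)
        (by rw [Set.uIcc_of_le (by norm_num : (-1:ℝ) ≤ 1)]; norm_num))
  have := intervalIntegral.integral_eq_sub_of_hasDerivAt_of_le h2 hcont hderiv hii
  rw [this]
  simp [Real.arccos_one, neg_div]

end ChebAux

open ChebAux

/-- If `f` is absolutely continuous on `[-1,1]` with integrable derivative `f'`
(i.e. `f x = f(-1) + ∫_{-1}^x f'` on `[-1,1]`), and `U₀ = ∫_{-1}^1 |f'|`, then the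
Chebyshev coefficient `a_n = (2/π)∫_{-1}^1 f(x)T_n(x)/√(1-x²) dx` satisfies
`|a_n| ≤ 2U₀/(πn)` for all `n ≥ 1`. -/
theorem chebyshev_coeff_bound_U0 (f f' : ℝ → ℝ)
    (hint : IntervalIntegrable f' volume (-1) 1)
    (hac : ∀ x ∈ Set.Icc (-1 : ℝ) 1, f x = f (-1) + ∫ t in (-1 : ℝ)..x, f' t)
    (n : ℕ) (hn : 1 ≤ n) :
    |(2 / Real.pi) *
        ∫ x in (-1 : ℝ)..1, f x * (T ℝ n).eval x / Real.sqrt (1 - x ^ 2)| ≤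
      2 * (∫ x in (-1 : ℝ)..1, |f' x|) / (Real.pi * n) := by
  have h11 : (-1 : ℝ) ≤ 1 := by norm_num
  have huIcc : Set.uIcc (-1 : ℝ) 1 = Set.Icc (-1 : ℝ) 1 := Set.uIcc_of_le h11
  set I : Set ℝ := Set.Ioc (-1 : ℝ) 1 with hI
  set F : ℝ → ℝ := fun x => ∫ t in (-1 : ℝ)..x, f' t with hF
  set s : ℝ → ℝ := fun t => Real.sin (n * Real.arccos t) / n with hs
  have hφ := phi_intervalIntegrable n
  have hn0 : (n : ℝ) ≠ 0 := by positivity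
  -- continuity of F
  have hFc : ContinuousOn F (Set.uIcc (-1 : ℝ) 1) :=
    intervalIntegral.continuousOn_primitive_interval' hint Set.left_mem_uIcc
  have hFφ : IntervalIntegrable (fun x => F x * phi n x) volume (-1) 1 :=
    hφ.continuousOn_mul hFc
  -- step 1 : rewrite integrand
  have step1 : (∫ x in (-1 : ℝ)..1, f x * (T ℝ n).eval x / Real.sqrt (1 - x ^ 2)) =
      f (-1) * (∫ x in (-1 : ℝ)..1, phi n x) + ∫ x in (-1 : ℝ)..1, F x * phi n x := by
    rw [← intervalIntegral.integral_const_mul, ← intervalIntegral.integral_add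
      (hφ.const_mul _) hFφ]
    apply intervalIntegral.integral_congr
    intro x hx
    rw [huIcc] at hx
    simp only []
    rw [hac x hx, phi, hF]
    ring
  -- the pure Chebyshev integral vanishes
  have step2 : (∫ x in (-1 : ℝ)..1, phi n x) = 0 := by
    rw [integral_phi n hn (le_refl (-1 : ℝ)) h11, Real.arccos_neg_one,
      Real.sin_nat_mul_pi, zero_div]
  -- the kernel for Fubini
  set K : ℝ × ℝ → ℝ :=
    fun p => Set.indicator {q : ℝ × ℝ | q.2 ≤ q.1} (fun q => f' q.2 * phi n q.1) p with hK
  have hmeasI : MeasurableSet I := measurableSet_Ioc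
  have hf'I : IntegrableOn f' I := hint.1
  have hφI : IntegrableOn (phi n) I := hφ.1
  have hK1 : ∀ x ∈ I, (∫ t in I, K (x, t)) = F x * phi n x := by
    intro x hx
    have hfun : (fun t => K (x, t)) = (Set.Iic x).indicator (fun t => f' t * phi n x) := by
      funext t
      by_cases h : t ≤ x <;> simp [hK, Set.indicator_apply, h]
    rw [hfun, MeasureTheory.setIntegral_indicator measurableSet_Iic]
    rw [hI, Set.Ioc_inter_Iic, min_eq_right hx.2, MeasureTheory.integral_mul_const]
    show (∫ a in Set.Ioc (-1:ℝ) x, f' a) * phi n x = (∫ t in (-1:ℝ)..x, f' t) * phi n x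
    rw [intervalIntegral.integral_of_le hx.1.le]
  have hK2 : ∀ t ∈ I, (∫ x in I, K (x, t)) = f' t * s t := by
    intro t ht
    have hfun : (fun x => K (x, t)) = (Set.Ici t).indicator (fun x => f' t * phi n x) := by
      funext x
      by_cases h : t ≤ x <;> simp [hK, Set.indicator_apply, h]
    rw [hfun, MeasureTheory.setIntegral_indicator measurableSet_Ici]
    have hset : I ∩ Set.Ici t = Set.Icc t 1 := by
      ext y
      simp only [hI, Set.mem_inter_iff, Set.mem_Ioc, Set.mem_Ici, Set.mem_Icc]
      constructor
      · rintro ⟨⟨_, h2⟩, h3⟩; exact ⟨h3, h2⟩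
      · rintro ⟨h3, h2⟩; exact ⟨⟨lt_of_lt_of_le ht.1 h3, h2⟩, h3⟩
    rw [hset, MeasureTheory.integral_Icc_eq_integral_Ioc, MeasureTheory.integral_const_mul,
      ← intervalIntegral.integral_of_le ht.2, integral_phi n hn ht.1.le ht.2, hs]
  have hKint : MeasureTheory.Integrable K ((volume.restrict I).prod (volume.restrict I)) := by
    have hm : MeasureTheory.AEStronglyMeasurable (fun p : ℝ × ℝ => f' p.2 * phi n p.1)
        ((volume.restrict I).prod (volume.restrict I)) :=
      (hf'I.aestronglyMeasurable.comp_snd).mul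
        (((phi_meas n).comp measurable_fst).aestronglyMeasurable)
    have hKm := hm.indicator (measurableSet_le measurable_snd measurable_fst)
    have hg : MeasureTheory.Integrable (fun p : ℝ × ℝ => |phi n p.1| * |f' p.2|)
        ((volume.restrict I).prod (volume.restrict I)) :=
      MeasureTheory.Integrable.mul_prod hφI.abs hf'I.abs
    refine hg.mono' hKm ?_
    filter_upwards with p
    have h1 : ‖K p‖ ≤ ‖f' p.2 * phi n p.1‖ := norm_indicator_le_norm_self _ _
    refine h1.trans_eq ?_
    simp [Real.norm_eq_abs, abs_mul, mul_comm]
  have hswap : (∫ x in I, ∫ t in I, K (x, t)) = ∫ t in I, ∫ x in I, K (x, t) :=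
    MeasureTheory.integral_integral_swap hKint
  -- put everything together
  have hBval : (∫ x in (-1 : ℝ)..1, F x * phi n x) = ∫ t in I, f' t * s t := by
    rw [intervalIntegral.integral_of_le h11, ← hI]
    calc (∫ x in I, F x * phi n x) = ∫ x in I, ∫ t in I, K (x, t) :=
          (MeasureTheory.setIntegral_congr_fun hmeasI fun x hx => (hK1 x hx).symm)
      _ = ∫ t in I, ∫ x in I, K (x, t) := hswap
      _ = ∫ t in I, f' t * s t :=
          MeasureTheory.setIntegral_congr_fun hmeasI fun t ht => hK2 t ht
  -- the bound
  have hsb : ∀ t, |s t| ≤ 1 / n := by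
    intro t
    rw [hs, abs_div, abs_of_pos (by positivity : (0:ℝ) < (n:ℝ))]
    gcongr
    exact Real.abs_sin_le_one _
  have hbound : |∫ t in I, f' t * s t| ≤ (∫ t in I, |f' t|) * (1 / n) := by
    calc |∫ t in I, f' t * s t| = ‖∫ t in I, f' t * s t‖ := (Real.norm_eq_abs _).symm
      _ ≤ ∫ t in I, ‖f' t * s t‖ := MeasureTheory.norm_integral_le_integral_norm _
      _ ≤ ∫ t in I, |f' t| * (1 / n) := by
          apply MeasureTheory.integral_mono_of_nonneg
          · filter_upwards with t; positivity
          · exact hf'I.abs.mul_const _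
          · filter_upwards with t
            rw [Real.norm_eq_abs, abs_mul]
            exact mul_le_mul_of_nonneg_left (hsb t) (abs_nonneg _)
      _ = (∫ t in I, |f' t|) * (1 / n) := MeasureTheory.integral_mul_const _ _
  have hU0 : (∫ x in (-1 : ℝ)..1, |f' x|) = ∫ t in I, |f' t| := by
    rw [intervalIntegral.integral_of_le h11, hI]
  have hU0nonneg : 0 ≤ ∫ t in I, |f' t| := MeasureTheory.integral_nonneg fun t => abs_nonneg _
  -- final arithmetic
  have hA : |∫ x in (-1 : ℝ)..1, f x * (T ℝ n).eval x / Real.sqrt (1 - x ^ 2)| ≤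
      (∫ t in I, |f' t|) * (1 / n) := by
    rw [step1, step2, mul_zero, zero_add, hBval]
    exact hbound
  have hπ : (0:ℝ) < Real.pi := Real.pi_pos
  rw [abs_mul, abs_of_pos (by positivity : (0:ℝ) < 2 / Real.pi)]
  have := mul_le_mul_of_nonneg_left hA (by positivity : (0:ℝ) ≤ 2 / Real.pi)
  refine this.trans_eq ?_
  rw [hU0]
  field_simp
end
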